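/- Let M be a nonempty closed subset of R^d with reach τ > 0, and let x be a point with dist(x, M) < τ, so that the metric projection Π_M(x) onto M is uniquely defined. Then the squared distance function satisfies ∇_x (½ · dist(x, M)²) = x − Π_M(x) at every such point (Federer's identity). -/
import Mathlib

open Metric Filter Asymptotics Topology RealInnerProductSpace

lemma proj_tendsto_aux {d : ℕ} (M : Set (EuclideanSpace ℝ (Fin d)))
    (hMc : IsClosed M) (τ : ℝ)
    (hreach : ∀ y : EuclideanSpace ℝ (Fin d), infDist y M < τ →
      ∃! z, z ∈ M ∧ dist y z = infDist y M)
    (proj : EuclideanSpace ℝ (Fin d) → EuclideanSpace ℝ (Fin d))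
    (hproj : ∀ y, infDist y M < τ → proj y ∈ M ∧ dist y (proj y) = infDist y M)
    (x : EuclideanSpace ℝ (Fin d)) (hx : infDist x M < τ) :
    Tendsto proj (𝓝 x) (𝓝 (proj x)) := by
  rw [tendsto_iff_seq_tendsto]
  intro u hu
  apply tendsto_of_subseq_tendsto
  intro ns hns
  have hw : Tendsto (fun n => u (ns n)) atTop (𝓝 x) := hu.comp hns
  set w : ℕ → EuclideanSpace ℝ (Fin d) := fun n => u (ns n) with hwdef
  have hinf : Tendsto (fun n => infDist (w n) M) atTop (𝓝 (infDist x M)) :=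
    ((continuous_infDist_pt M).tendsto x).comp hw
  have hev1 : ∀ᶠ n in atTop, infDist (w n) M < τ := hinf.eventually_lt_const hx
  have hev2 : ∀ᶠ n in atTop, dist (w n) x ≤ 1 := by
    have := hw.eventually_mem (Metric.closedBall_mem_nhds x one_pos)
    filter_upwards [this] with n h
    exact mem_closedBall.mp h
  have hball : ∀ᶠ n in atTop, proj (w n) ∈ closedBall x (τ + 1) := by
    filter_upwards [hev1, hev2] with n h1 h2
    have h3 := hproj (w n) h1
    have : dist (proj (w n)) x ≤ dist (proj (w n)) (w n) + dist (w n) x := dist_triangle _ _ _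
    rw [mem_closedBall]
    have h4 : dist (proj (w n)) (w n) = infDist (w n) M := by rw [dist_comm]; exact h3.2
    linarith [h1.le]
  obtain ⟨a, _, φ, hφ, haφ⟩ :=
    (isCompact_closedBall x (τ + 1)).tendsto_subseq' hball.frequently
  have hev1' : ∀ᶠ n in atTop, infDist (w (φ n)) M < τ := hφ.tendsto_atTop.eventually hev1
  have haM : a ∈ M := by
    apply hMc.mem_of_tendsto haφ
    filter_upwards [hev1'] with n h1
    exact (hproj _ h1).1
  have hwφ : Tendsto (fun n => w (φ n)) atTop (𝓝 x) := hw.comp hφ.tendsto_atTop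
  have hda : Tendsto (fun n => dist (w (φ n)) (proj (w (φ n)))) atTop (𝓝 (dist x a)) :=
    hwφ.dist haφ
  have hdinf : Tendsto (fun n => dist (w (φ n)) (proj (w (φ n)))) atTop (𝓝 (infDist x M)) := by
    apply Tendsto.congr' _ (hinf.comp hφ.tendsto_atTop)
    filter_upwards [hev1'] with n h1
    exact ((hproj _ h1).2).symm
  have hxa : dist x a = infDist x M := tendsto_nhds_unique hda hdinf
  obtain ⟨z, hz, huniq⟩ := hreach x hx
  have h1 : a = z := huniq a ⟨haM, hxa⟩
  have h2 : proj x = z := huniq (proj x) (hproj x hx)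
  exact ⟨φ, by rw [show a = proj x from h1.trans h2.symm] at haφ; exact haφ⟩

/-- Federer's identity: within the reach, the gradient of half the squared
distance to a closed set `M` is `x - Π_M x`. -/
theorem federer_gradient_sq_dist {d : ℕ} (M : Set (EuclideanSpace ℝ (Fin d)))
    (hMc : IsClosed M) (hMne : M.Nonempty) (τ : ℝ) (hτ : 0 < τ)
    (hreach : ∀ y : EuclideanSpace ℝ (Fin d), infDist y M < τ →
      ∃! z, z ∈ M ∧ dist y z = infDist y M)
    (proj : EuclideanSpace ℝ (Fin d) → EuclideanSpace ℝ (Fin d))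
    (hproj : ∀ y, infDist y M < τ → proj y ∈ M ∧ dist y (proj y) = infDist y M)
    (x : EuclideanSpace ℝ (Fin d)) (hx : infDist x M < τ) :
    HasGradientAt (fun y => (1 / 2) * (infDist y M) ^ 2) (x - proj x) x := by
  have hcont : Filter.Tendsto proj (𝓝 x) (𝓝 (proj x)) :=
    proj_tendsto_aux M hMc τ hreach proj hproj x hx
  rw [hasGradientAt_iff_isLittleO, isLittleO_iff]
  intro c hc
  have hpx := hproj x hx
  have h1 : ∀ᶠ y in 𝓝 x, infDist y M < τ :=
    ((continuous_infDist_pt M).tendsto x).eventually_lt_const hx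
  have h2 : ∀ᶠ y in 𝓝 x, ‖proj y - proj x‖ ≤ c / 2 := by
    have := hcont.eventually_mem (Metric.closedBall_mem_nhds (proj x) (half_pos hc))
    filter_upwards [this] with y h
    rw [← dist_eq_norm]; exact mem_closedBall.mp h
  have h3 : ∀ᶠ y in 𝓝 x, ‖y - x‖ ≤ c := by
    filter_upwards [Metric.closedBall_mem_nhds x hc] with y h
    rw [← dist_eq_norm]; exact mem_closedBall.mp h
  filter_upwards [h1, h2, h3] with y hy1 hy2 hy3
  have hq := hproj y hy1
  set p := proj x with hp
  set q := proj y with hqq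
  have hdx : infDist x M = ‖x - p‖ := by rw [← hpx.2, dist_eq_norm]
  have hdy : infDist y M = ‖y - q‖ := by rw [← hq.2, dist_eq_norm]
  have hyle : infDist y M ≤ ‖y - p‖ := by
    rw [← dist_eq_norm]; exact infDist_le_dist_of_mem hpx.1
  have hxle : infDist x M ≤ ‖x - q‖ := by
    rw [← dist_eq_norm]; exact infDist_le_dist_of_mem hq.1
  have hysq : infDist y M ^ 2 ≤ ‖y - p‖ ^ 2 :=
    pow_le_pow_left₀ (infDist_nonneg) hyle 2
  have hxsq : infDist x M ^ 2 ≤ ‖x - q‖ ^ 2 :=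
    pow_le_pow_left₀ (infDist_nonneg) hxle 2
  have hexp1 : ‖y - p‖ ^ 2 = ‖y - x‖ ^ 2 + 2 * (@inner ℝ _ _ (y - x) (x - p)) + ‖x - p‖ ^ 2 := by
    rw [show y - p = (y - x) + (x - p) by abel]; exact norm_add_sq_real _ _
  have hexp2 : ‖x - q‖ ^ 2 = ‖y - q‖ ^ 2 - 2 * (@inner ℝ _ _ (y - q) (y - x)) + ‖y - x‖ ^ 2 := by
    rw [show x - q = (y - q) - (y - x) by abel]; exact norm_sub_sq_real _ _
  have hsplit : (@inner ℝ _ _ (y - q) (y - x)) - (@inner ℝ _ _ (x - p) (y - x)) = ‖y - x‖ ^ 2 + (@inner ℝ _ _ (p - q) (y - x)) := by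
    rw [← inner_sub_left, show (y - q) - (x - p) = (y - x) + (p - q) by abel, inner_add_left,
      real_inner_self_eq_norm_sq]
  have hcomm : (@inner ℝ _ _ (x - p) (y - x)) = (@inner ℝ _ _ (y - x) (x - p)) := real_inner_comm _ _
  have hcauchy : |(@inner ℝ _ _ (p - q) (y - x))| ≤ ‖p - q‖ * ‖y - x‖ := abs_real_inner_le_norm _ _
  have hpq : ‖p - q‖ ≤ c / 2 := by rw [norm_sub_rev]; exact hy2
  have hnn : (0:ℝ) ≤ ‖y - x‖ := norm_nonneg _
  rw [Real.norm_eq_abs, abs_le]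
  have hC := abs_le.mp hcauchy
  have rsq : ‖y - x‖ ^ 2 = ‖y - x‖ * ‖y - x‖ := sq (‖y - x‖)
  have key : ‖y - x‖ * ‖y - x‖ ≤ c * ‖y - x‖ := mul_le_mul_of_nonneg_right hy3 hnn
  have e1 : infDist y M ^ 2 ≤ ‖y - x‖ ^ 2 + 2 * (@inner ℝ _ _ (x - p) (y - x)) + infDist x M ^ 2 := by
    rw [hdx, hcomm]; linarith [hysq, hexp1]
  have e2 : infDist x M ^ 2 ≤ infDist y M ^ 2 - 2 * (@inner ℝ _ _ (y - q) (y - x)) + ‖y - x‖ ^ 2 := by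
    rw [hdy]; linarith [hxsq, hexp2]
  have e3 : ‖p - q‖ * ‖y - x‖ ≤ (c / 2) * ‖y - x‖ := mul_le_mul_of_nonneg_right hpq hnn
  constructor
  · linarith only [e2, hsplit, hC.1, e3, mul_self_nonneg (‖y - x‖), rsq, key]
  · linarith only [e1, key, rsq, mul_self_nonneg (‖y - x‖)]
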